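/- If B ≤ A are hypergraphs (B self-sufficient in A), then the pregeometry G_B associated to B is strongly embedded in the pregeometry G_A associated to A: G_B ⊑ G_A. -/

import Mathlib

open scoped Classical

/-- A combinatorial pregeometry (matroid) on the ground type `α`, given by a
dimension (rank) function on finite subsets. -/
structure Pregeometry (α : Type*) [DecidableEq α] where
  dim : Finset α → ℕ
  dim_empty : dim ∅ = 0
  dim_le_insert : ∀ (A : Finset α) (x : α), dim A ≤ dim (insert x A)
  insert_le_dim : ∀ (A : Finset α) (x : α), dim (insert x A) ≤ dim A + 1
  submodular : ∀ A B : Finset α, dim (A ∪ B) + dim (A ∩ B) ≤ dim A + dim B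

namespace Pregeometry

variable {α : Type*} [DecidableEq α] (G : Pregeometry α)

/-- Closure of an arbitrary subset. -/
def cl (Y : Set α) : Set α :=
  {x | ∃ A : Finset α, ↑A ⊆ Y ∧ G.dim (insert x A) = G.dim A}

/-- `Y` is closed (in the ambient pregeometry `G`). -/
def IsClosed (Y : Set α) : Prop := G.cl Y = Y

/-- `X` is a closed set of the subpregeometry of `G` induced on `P`
(whose closure operator is `Y ↦ cl Y ∩ P`). -/
def IsClosedIn (P X : Set α) : Prop := X ⊆ P ∧ G.cl X ∩ P = X

/-- Dimension of an arbitrary subset, with value `⊤` when infinite-dimensional. -/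
noncomputable def edim (Y : Set α) : ℕ∞ :=
  ⨆ (A : Finset α) (_ : ↑A ⊆ Y), (G.dim A : ℕ∞)

/-- The (natural number) dimension of a finite-dimensional subset. -/
noncomputable def sdim (Y : Set α) : ℕ := (G.edim Y).toNat

/-- The alternating inclusion–exclusion sum
`Δ_G(Σ) = Σ_{∅ ≠ S ⊆ Σ} (-1)^{|S|+1} d(⋂ S)` of a finite collection of sets. -/
noncomputable def flatSum (Sig : Finset (Set α)) : ℤ :=
  ∑ S ∈ Sig.powerset.filter (· ≠ ∅),
    (-1) ^ (S.card + 1) * (G.sdim (⋂₀ ↑S) : ℤ)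

/-- `P ⊑* Q`: for the subpregeometries induced on `P ⊆ Q`, the dimension of the
intersection of two closed sets of `P` equals the dimension of the intersection
of their closures in `Q` (the closure of `X` in `Q` being `cl X ∩ Q`). -/
def SqStar (P Q : Set α) : Prop := P ⊆ Q ∧
  ∀ X₁ X₂ : Set α, G.IsClosedIn P X₁ → G.IsClosedIn P X₂ →
    G.edim (X₁ ∩ X₂) = G.edim (G.cl X₁ ∩ G.cl X₂ ∩ Q)

/-- `P ⊑ Q`: `P` is strongly embedded in `Q`: for every finite collection `Σ` of
finite-dimensional closed sets of `Q`, `Δ_P(Σ_P) ≤ Δ_Q(Σ)` where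
`Σ_P = {E ∩ P : E ∈ Σ}`. -/
def Sq (P Q : Set α) : Prop := P ⊆ Q ∧
  ∀ Sig : Finset (Set α), (∀ E ∈ Sig, G.IsClosedIn Q E) →
    (∀ E ∈ Sig, G.edim E ≠ ⊤) →
    G.flatSum (Sig.image (· ∩ P)) ≤ G.flatSum Sig

/-- The subpregeometry induced on `P` is flat: every finite collection of
finite-dimensional closed sets satisfies `d(⋃ Σ) ≤ Δ(Σ)`. -/
def FlatIn (P : Set α) : Prop :=
  ∀ Sig : Finset (Set α), (∀ E ∈ Sig, G.IsClosedIn P E) →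
    (∀ E ∈ Sig, G.edim E ≠ ⊤) →
    (G.sdim (⋃₀ ↑Sig) : ℤ) ≤ G.flatSum Sig

/-- The α-function of the subpregeometry of `G` induced on `P`:
`α(X) = |X| − d(X) − Σ_{Y ⊊ X closed} α(Y)`. -/
noncomputable def alphaIn (P : Set α) (X : Finset α) : ℤ :=
  (X.card : ℤ) - (G.dim X : ℤ) -
    ∑ Y ∈ (X.powerset.filter fun Y => Y ≠ X ∧ G.IsClosedIn P ↑Y).attach,
      alphaIn P Y.1
termination_by X.card
decreasing_by
  have h := Y.2
  simp only [Finset.mem_filter, Finset.mem_powerset] at h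
  exact Finset.card_lt_card (lt_of_le_of_ne h.1 h.2.1)

end Pregeometry

/-- A hypergraph on the vertex type `α`: a set of nonempty finite edges. -/
structure HGraph (α : Type*) where
  edges : Set (Finset α)
  nonempty_edges : ∀ e ∈ edges, e ≠ ∅

namespace HGraph

variable {α : Type*} [DecidableEq α] (A : HGraph α)

/-- The set of edges contained in a set of vertices. -/
def edgesIn (P : Set α) : Set (Finset α) := {e | e ∈ A.edges ∧ ↑e ⊆ P}

/-- The predimension `δ(P) = |P| − |R[P]|` of a finite set of vertices. -/
noncomputable def delta (P : Finset α) : ℤ :=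
  (P.card : ℤ) - (A.edgesIn ↑P).ncard

/-- The relative predimension `δ(L/P) = |L∖P| − |R[L∪P]∖R[P]|`. -/
noncomputable def deltaRel (L : Finset α) (P : Set α) : ℤ :=
  ((↑L \ P : Set α).ncard : ℤ) -
    ({e | e ∈ A.edges ∧ ↑e ⊆ ↑L ∪ P ∧ ¬ ↑e ⊆ P} : Set (Finset α)).ncard

/-- `P` is self-sufficient in `A`: `δ(X/P) ≥ 0` for every finite `X`, stated so
as to be meaningful even when infinitely many edges are involved. -/
def SelfSuff (P : Set α) : Prop :=
  ∀ X : Finset α, ∀ Es : Finset (Finset α),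
    (∀ e ∈ Es, e ∈ A.edges ∧ ↑e ⊆ ↑X ∪ P ∧ ¬ ↑e ⊆ P) →
    (Es.card : ℤ) ≤ ((↑X \ P : Set α).ncard : ℤ)

/-- The dimension function associated to a hypergraph:
`d(X) = inf {δ(B) : X ⊆ B finite}`. -/
noncomputable def hdim (X : Finset α) : ℤ :=
  sInf {d : ℤ | ∃ B : Finset α, X ⊆ B ∧ d = A.delta B}

/-- The induced subhypergraph on a set `P` of vertices (keeping `α` as the
ambient vertex type). -/
def restrict (P : Set α) : HGraph α :=
  ⟨{e | e ∈ A.edges ∧ ↑e ⊆ P}, fun e he => A.nonempty_edges e he.1⟩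

/-- A pregeometry `G` is represented by the hypergraph `A` if the associated
dimension function of `A` is the dimension function of `G`. -/
def Represents (G : Pregeometry α) : Prop :=
  ∀ X : Finset α, (G.dim X : ℤ) = A.hdim X

end HGraph

/-!
Take a finite set `D` of minimal predimension among its supersets that contains bases of all
the intersections occurring in `Δ_{G_A}(Σ)` and `Δ_{G_B}(Σ_P)`. Inside such a set the points of
a closed set have predimension equal to their dimension, and `D ∩ P` has the same minimality
because `P ≤ A`; on subsets of `P` the dimensions of `G_A` and `G_B` agree. Hence both sides are
inclusion–exclusion sums of predimensions, which collapse to the number of points of `D` covered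
by the family minus the number of edges of `D` inside a single member. Passing from `Σ` to `Σ_P`
loses the covered points outside `P` and the covered edges not inside `P`, and self-sufficiency
of `P` says there are no more of the latter than of the former.
-/

namespace Finset

theorem card_filter_exists_eq_sum_powerset {β ι : Type*} [DecidableEq ι] (U : Finset β)
    (s : Finset ι) (p : ι → β → Prop) :
    (#(U.filter fun u => ∃ i ∈ s, p i u) : ℤ) =
      ∑ t ∈ s.powerset.filter (· ≠ ∅),
        (-1 : ℤ) ^ (#t + 1) * #(U.filter fun u => ∀ i ∈ t, p i u) := by
  have key u := indicator_biUnion_eq_sum_powerset (G := ℤ) s (fun i => {u | p i u}) 1 u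
  simp only [card_filter, Nat.cast_sum, Nat.cast_ite, Nat.cast_one, Nat.cast_zero, mul_sum]
  rw [sum_comm]
  refine sum_congr rfl fun u _ => ?_
  simp only [← filter_congr (fun t _ => nonempty_iff_ne_empty)]
  convert key u using 2 with t <;> simp [Set.indicator_apply]

end Finset

namespace Pregeometry

variable {α : Type*} [DecidableEq α] (G : Pregeometry α)

theorem dim_le_dim_union (X Z : Finset α) : G.dim X ≤ G.dim (Z ∪ X) := by
  induction Z using Finset.induction_on with
  | empty => simp
  | insert z Z _ ih => rw [Finset.insert_union]; exact ih.trans (G.dim_le_insert _ z)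

theorem dim_mono {X Y : Finset α} (h : X ⊆ Y) : G.dim X ≤ G.dim Y := by
  simpa [Finset.sdiff_union_of_subset h] using G.dim_le_dim_union X (Y \ X)

theorem subset_cl (Y : Set α) : Y ⊆ G.cl Y :=
  fun x hx => ⟨{x}, by simpa using hx, by simp⟩

theorem cl_mono {Y Z : Set α} (h : Y ⊆ Z) : G.cl Y ⊆ G.cl Z :=
  fun _ ⟨X, hX, hx⟩ => ⟨X, hX.trans h, hx⟩

theorem dim_le_edim {X : Finset α} {Y : Set α} (h : ↑X ⊆ Y) : (G.dim X : ℕ∞) ≤ G.edim Y :=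
  le_iSup₂ (f := fun (X : Finset α) (_ : ↑X ⊆ Y) => (G.dim X : ℕ∞)) X h

theorem edim_mono {Y Z : Set α} (h : Y ⊆ Z) : G.edim Y ≤ G.edim Z :=
  iSup₂_le fun _ hX => G.dim_le_edim (hX.trans h)

theorem dim_le_sdim {X : Finset α} {Y : Set α} (hY : G.edim Y ≠ ⊤) (h : ↑X ⊆ Y) :
    G.dim X ≤ G.sdim Y := by
  have := G.dim_le_edim h
  rwa [← ENat.natCast_toNat hY, Nat.cast_le] at this

theorem exists_dim_eq_sdim {Y : Set α} (hY : G.edim Y ≠ ⊤) :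
    ∃ X : Finset α, ↑X ⊆ Y ∧ G.dim X = G.sdim Y := by
  have hY' : ⨆ X : {X : Finset α // ↑X ⊆ Y}, (G.dim X : ℕ∞) < ⊤ := by
    rw [edim, iSup_subtype'] at hY; exact hY.lt_top
  have : Nonempty {X : Finset α // ↑X ⊆ Y} := ⟨⟨∅, by simp⟩⟩
  obtain ⟨⟨X, hX⟩, hXY⟩ := ENat.exists_eq_iSup_of_lt_top hY'
  refine ⟨X, hX, ?_⟩
  rw [sdim, edim, iSup_subtype', ← hXY, ENat.toNat_natCast]

theorem edim_sInter_ne_top {t : Finset (Set α)} (hne : t.Nonempty)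
    (h : ∀ E ∈ t, G.edim E ≠ ⊤) : G.edim (⋂₀ ↑t) ≠ ⊤ := by
  obtain ⟨E, hE⟩ := hne
  exact ne_top_of_le_ne_top (h E hE) (G.edim_mono (Set.sInter_subset_of_mem hE))

theorem exists_dim_filter_sInter_eq_sdim {𝒮 : Finset (Set α)} (h : ∀ E ∈ 𝒮, G.edim E ≠ ⊤) :
    ∃ X : Finset α, ∀ t ⊆ 𝒮, t.Nonempty → ∀ D, X ⊆ D →
      G.dim (D.filter (· ∈ ⋂₀ (t : Set (Set α)))) = G.sdim (⋂₀ ↑t) := by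
  have hbasis : ∀ t ∈ 𝒮.powerset.filter Finset.Nonempty, ∃ X : Finset α,
      ↑X ⊆ ⋂₀ (t : Set (Set α)) ∧ G.dim X = G.sdim (⋂₀ ↑t) := fun t ht => by
    simp only [Finset.mem_filter, Finset.mem_powerset] at ht
    exact G.exists_dim_eq_sdim (G.edim_sInter_ne_top ht.2 fun E hE => h E (ht.1 hE))
  choose! B hBY hBd using hbasis
  refine ⟨(𝒮.powerset.filter Finset.Nonempty).biUnion B, fun t ht hne D hD => ?_⟩
  refine le_antisymm (G.dim_le_sdim (G.edim_sInter_ne_top hne fun E hE => h E (ht hE))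
    fun x hx => (Finset.mem_filter.mp hx).2) ?_
  have hmem : t ∈ 𝒮.powerset.filter Finset.Nonempty := by simp [ht, hne]
  rw [← hBd t hmem]
  refine G.dim_mono fun x hx => Finset.mem_filter.mpr ⟨hD ?_, hBY t hmem hx⟩
  exact Finset.mem_biUnion.mpr ⟨t, hmem, hx⟩

variable {G}

theorem IsClosed.sInter {𝒮 : Set (Set α)} (h : ∀ E ∈ 𝒮, G.IsClosed E) :
    G.IsClosed (⋂₀ 𝒮) :=
  (Set.subset_sInter fun E hE => h E hE ▸ G.cl_mono (Set.sInter_subset_of_mem hE)).antisymm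
    (G.subset_cl _)

theorem sdim_congr {G' : Pregeometry α} {Y : Set α}
    (h : ∀ X : Finset α, ↑X ⊆ Y → G.dim X = G'.dim X) : G.sdim Y = G'.sdim Y := by
  unfold sdim edim
  congr 1
  exact iSup_congr fun X => iSup_congr fun hX => by rw [h X hX]

theorem exists_isClosed_sInter_eq_inter {Sig : Finset (Set α)} (hSig : ∀ E ∈ Sig, G.IsClosed E)
    (P : Set α) {S : Finset (Set α)} (hS : S ⊆ Sig.image (· ∩ P)) (hne : S.Nonempty) :
    ∃ F, G.IsClosed F ∧ ⋂₀ ↑S = F ∩ P := by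
  refine ⟨⋂₀ {E | G.IsClosed E ∧ E ∩ P ∈ S}, IsClosed.sInter fun E hE => hE.1, ?_⟩
  ext x
  simp only [Set.mem_sInter, Set.mem_inter_iff, Finset.mem_coe, Set.mem_ofPred_eq]
  constructor
  · intro hx
    obtain ⟨T, hT⟩ := hne
    obtain ⟨E, -, rfl⟩ := Finset.mem_image.mp (hS hT)
    exact ⟨fun E' hE' => (hx _ hE'.2).1, (hx _ hT).2⟩
  · rintro ⟨hxF, hxP⟩ T hT
    obtain ⟨E, hE, rfl⟩ := Finset.mem_image.mp (hS hT)
    exact ⟨hxF E ⟨hSig E hE, hT⟩, hxP⟩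

end Pregeometry

namespace HGraph

open Finset

variable {α : Type*} (A : HGraph α)

noncomputable def edgesInFinset (B : Finset α) : Finset (Finset α) :=
  B.powerset.filter (· ∈ A.edges)

variable {A}

@[simp]
theorem mem_edgesInFinset {B e : Finset α} : e ∈ A.edgesInFinset B ↔ e ⊆ B ∧ e ∈ A.edges := by
  simp [edgesInFinset]

theorem edgesInFinset_filter (B : Finset α) (Y : Set α) :
    A.edgesInFinset (B.filter (· ∈ Y)) = (A.edgesInFinset B).filter fun e => ↑e ⊆ Y := by
  ext e
  simp only [mem_edgesInFinset, mem_filter, subset_iff, Set.subset_def, mem_coe]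
  grind

theorem delta_eq_card_sub_card (B : Finset α) :
    A.delta B = #B - #(A.edgesInFinset B) := by
  have : A.edgesIn ↑B = ↑(A.edgesInFinset B) := by
    ext e; simp [edgesIn, and_comm]
  rw [delta, this, Set.ncard_coe_finset]

theorem delta_nonneg (hA : A.SelfSuff ∅) (B : Finset α) : 0 ≤ A.delta B := by
  have h := hA B (A.edgesInFinset B) fun e he => by
    rw [mem_edgesInFinset] at he
    exact ⟨he.2, by simpa using he.1, fun h => A.nonempty_edges e he.2 (by simpa using h)⟩
  rw [Set.sdiff_empty, Set.ncard_coe_finset] at h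
  rw [delta_eq_card_sub_card]
  omega

theorem delta_union_add_delta_inter_le [DecidableEq α] (B C : Finset α) :
    A.delta (B ∪ C) + A.delta (B ∩ C) ≤ A.delta B + A.delta C := by
  have hunion : A.edgesInFinset B ∪ A.edgesInFinset C ⊆ A.edgesInFinset (B ∪ C) := by
    intro e
    simp only [mem_union, mem_edgesInFinset]
    rintro (⟨h, he⟩ | ⟨h, he⟩)
    exacts [⟨h.trans subset_union_left, he⟩, ⟨h.trans subset_union_right, he⟩]
  have hinter : A.edgesInFinset (B ∩ C) = A.edgesInFinset B ∩ A.edgesInFinset C := by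
    ext e; simp only [mem_edgesInFinset, mem_inter, subset_inter_iff]; tauto
  simp only [delta_eq_card_sub_card, hinter]
  have := card_le_card hunion
  have := card_union_add_card_inter B C
  have := card_union_add_card_inter (A.edgesInFinset B) (A.edgesInFinset C)
  omega

theorem delta_filter_le {P : Set α} (hP : A.SelfSuff P) (B : Finset α) :
    A.delta (B.filter (· ∈ P)) ≤ A.delta B := by
  have h := hP B ((A.edgesInFinset B).filter fun e => ¬ ↑e ⊆ P) fun e he => by
    simp only [mem_filter, mem_edgesInFinset] at he
    exact ⟨he.1.2, fun x hx => Or.inl (he.1.1 hx), he.2⟩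
  have hdiff : (↑B \ P : Set α) = ↑(B.filter (· ∉ P)) := by ext; simp
  rw [hdiff, Set.ncard_coe_finset] at h
  rw [delta_eq_card_sub_card, delta_eq_card_sub_card, edgesInFinset_filter]
  have := card_filter_add_card_filter_not (s := B) (· ∈ P)
  have := card_filter_add_card_filter_not (s := A.edgesInFinset B) fun e => ↑e ⊆ P
  omega

theorem delta_restrict_of_subset {P : Set α} {B : Finset α} (hB : ↑B ⊆ P) :
    (A.restrict P).delta B = A.delta B := by
  have : (A.restrict P).edgesInFinset B = A.edgesInFinset B := by
    ext e
    simp only [mem_edgesInFinset, restrict, Set.mem_ofPred_eq]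
    exact ⟨fun h => ⟨h.1, h.2.1⟩, fun h => ⟨h.1, h.2, (coe_subset.mpr h.1).trans hB⟩⟩
  rw [delta_eq_card_sub_card, delta_eq_card_sub_card, this]

theorem delta_le_delta_restrict (P : Set α) (B : Finset α) :
    A.delta B ≤ (A.restrict P).delta B := by
  have : (A.restrict P).edgesInFinset B ⊆ A.edgesInFinset B := fun e he => by
    simp only [mem_edgesInFinset, restrict, Set.mem_ofPred_eq] at he ⊢
    exact ⟨he.1, he.2.1⟩
  rw [delta_eq_card_sub_card, delta_eq_card_sub_card]
  have := card_le_card this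
  omega

theorem hdim_le_delta (h0 : ∀ C, 0 ≤ A.delta C) {X B : Finset α} (h : X ⊆ B) :
    A.hdim X ≤ A.delta B :=
  csInf_le ⟨0, by rintro _ ⟨C, _, rfl⟩; exact h0 C⟩ ⟨B, h, rfl⟩

theorem exists_delta_eq_hdim (h0 : ∀ C, 0 ≤ A.delta C) (X : Finset α) :
    ∃ B, X ⊆ B ∧ A.delta B = A.hdim X := by
  obtain ⟨B, hXB, hB⟩ := Int.csInf_mem (s := {d | ∃ B, X ⊆ B ∧ d = A.delta B})
    ⟨_, X, subset_rfl, rfl⟩ ⟨0, by rintro _ ⟨C, _, rfl⟩; exact h0 C⟩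
  exact ⟨B, hXB, hB.symm⟩

theorem le_hdim {X : Finset α} {d : ℤ} (h : ∀ B, X ⊆ B → d ≤ A.delta B) : d ≤ A.hdim X :=
  le_csInf ⟨_, X, subset_rfl, rfl⟩ (by rintro _ ⟨B, hB, rfl⟩; exact h B hB)

theorem hdim_restrict {P : Set α} (hA : A.SelfSuff ∅) (hP : A.SelfSuff P) {X : Finset α}
    (hX : ↑X ⊆ P) : (A.restrict P).hdim X = A.hdim X := by
  have h0 := delta_nonneg hA
  have h0' C := (h0 C).trans (delta_le_delta_restrict P C)
  refine le_antisymm (le_hdim fun B hB => ?_) (le_hdim fun B hB => ?_)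
  · calc (A.restrict P).hdim X
        ≤ (A.restrict P).delta (B.filter (· ∈ P)) :=
          hdim_le_delta h0' fun x hx => mem_filter.mpr ⟨hB hx, hX hx⟩
      _ = A.delta (B.filter (· ∈ P)) := delta_restrict_of_subset fun x hx => (mem_filter.mp hx).2
      _ ≤ A.delta B := delta_filter_le hP B
  · exact (hdim_le_delta h0 hB).trans (delta_le_delta_restrict P B)

variable (A) in
/-- Finite self-sufficient sets, `D ≤ A` in the paper. -/
def IsStrong (D : Finset α) : Prop := ∀ C, D ⊆ C → A.delta D ≤ A.delta C

theorem exists_isStrong_superset (h0 : ∀ C, 0 ≤ A.delta C) (X : Finset α) :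
    ∃ D, X ⊆ D ∧ A.IsStrong D := by
  obtain ⟨D, hXD, hD⟩ := exists_delta_eq_hdim h0 X
  exact ⟨D, hXD, fun C hC => hD ▸ hdim_le_delta h0 (hXD.trans hC)⟩

theorem IsStrong.filter [DecidableEq α] {P : Set α} (hP : A.SelfSuff P) {D : Finset α}
    (hD : A.IsStrong D) : A.IsStrong (D.filter (· ∈ P)) := by
  intro C hC
  have hCD : (C ∩ D).filter (· ∈ P) = D.filter (· ∈ P) := by
    ext x; simp only [mem_filter, mem_inter]
    exact ⟨fun h => ⟨h.1.2, h.2⟩, fun h => ⟨⟨hC (mem_filter.mpr h), h.1⟩, h.2⟩⟩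
  have hsub := delta_union_add_delta_inter_le (A := A) C D
  have hmin := hD (C ∪ D) subset_union_right
  have hfilter := delta_filter_le hP (C ∩ D)
  rw [hCD] at hfilter
  linarith

/-- A `δ`-minimal superset of `D ∩ E` lies in `cl E = E`, and submodularity against `D` brings
it back into `D`. -/
theorem IsStrong.delta_filter_eq_dim [DecidableEq α] {G : Pregeometry α} (hG : A.Represents G)
    (h0 : ∀ C, 0 ≤ A.delta C) {D : Finset α} (hD : A.IsStrong D) {E : Set α}
    (hE : G.IsClosed E) : A.delta (D.filter (· ∈ E)) = G.dim (D.filter (· ∈ E)) := by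
  set F := D.filter (· ∈ E)
  obtain ⟨B, hFB, hB⟩ := exists_delta_eq_hdim h0 F
  have hBE : ∀ b ∈ B, b ∈ E := fun b hb => by
    have hdim : G.dim (insert b F) = G.dim F := by
      refine le_antisymm ?_ (G.dim_le_insert F b)
      have := hdim_le_delta h0 (insert_subset hb hFB)
      rw [← hG, hB, ← hG] at this
      exact_mod_cast this
    rw [← hE]
    exact ⟨F, fun x hx => (mem_filter.mp hx).2, hdim⟩
  have hBD : B ∩ D = F := by
    ext x; simp only [F, mem_inter, mem_filter]
    exact ⟨fun h => ⟨h.2, hBE x h.1⟩, fun h => ⟨hFB (mem_filter.mpr h), h.1⟩⟩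
  have hsub := delta_union_add_delta_inter_le (A := A) B D
  rw [hBD] at hsub
  have hmin := hD (B ∪ D) subset_union_right
  have hF := hdim_le_delta h0 (subset_refl F)
  rw [hG]
  linarith

variable (A) in
noncomputable def deltaCover (D : Finset α) (Sig : Finset (Set α)) : ℤ :=
  #(D.filter fun x => ∃ E ∈ Sig, x ∈ E) - #((A.edgesInFinset D).filter fun e => ∃ E ∈ Sig, ↑e ⊆ E)

theorem sum_delta_filter_sInter (D : Finset α) (Sig : Finset (Set α)) :
    ∑ S ∈ Sig.powerset.filter (· ≠ ∅),
      (-1 : ℤ) ^ (#S + 1) * A.delta (D.filter (· ∈ ⋂₀ (S : Set (Set α)))) = A.deltaCover D Sig := by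
  simp only [delta_eq_card_sub_card, edgesInFinset_filter]
  simp only [deltaCover, mul_sub, sum_sub_distrib, card_filter_exists_eq_sum_powerset,
    Set.mem_sInter, Set.subset_sInter_iff, mem_coe]

theorem deltaCover_image_inter_le {P : Set α} (hP : A.SelfSuff P) (D : Finset α)
    (Sig : Finset (Set α)) : A.deltaCover D (Sig.image (· ∩ P)) ≤ A.deltaCover D Sig := by
  rw [deltaCover, deltaCover]
  set X := D.filter fun x => ∃ E ∈ Sig, x ∈ E
  set Es := (A.edgesInFinset D).filter fun e => ∃ E ∈ Sig, ↑e ⊆ E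
  have hX : (D.filter fun x => ∃ E ∈ Sig.image (· ∩ P), x ∈ E) = X.filter (· ∈ P) := by
    ext x; simp [X]; tauto
  have hEs : ((A.edgesInFinset D).filter fun e => ∃ E ∈ Sig.image (· ∩ P), ↑e ⊆ E) =
      Es.filter fun e => ↑e ⊆ P := by
    ext e; simp [Es, Set.subset_inter_iff]; tauto
  have hss := hP X (Es.filter fun e => ¬ ↑e ⊆ P) fun e he => by
    simp only [Es, mem_filter, mem_edgesInFinset] at he
    obtain ⟨⟨⟨heD, he⟩, E, hE, heE⟩, heP⟩ := he
    exact ⟨he, fun x hx => Or.inl (mem_filter.mpr ⟨heD hx, E, hE, heE hx⟩), heP⟩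
  have hdiff : (↑X \ P : Set α) = ↑(X.filter (· ∉ P)) := by ext; simp
  rw [hdiff, Set.ncard_coe_finset] at hss
  rw [hX, hEs]
  have := card_filter_add_card_filter_not (s := X) (· ∈ P)
  have := card_filter_add_card_filter_not (s := Es) fun e => ↑e ⊆ P
  omega

section

variable [DecidableEq α]

theorem Represents.sdim_eq_of_restrict {P : Set α} (hA : A.SelfSuff ∅) (hP : A.SelfSuff P)
    {Ga Gb : Pregeometry α} (hga : A.Represents Ga) (hgb : (A.restrict P).Represents Gb)
    {Y : Set α} (hY : Y ⊆ P) : Gb.sdim Y = Ga.sdim Y :=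
  Pregeometry.sdim_congr fun X hX => by
    exact_mod_cast (hgb X).trans ((hdim_restrict hA hP (hX.trans hY)).trans (hga X).symm)

theorem IsStrong.delta_filter_eq_dim_of_eq_inter {P : Set α} (hP : A.SelfSuff P)
    {G : Pregeometry α} (hG : A.Represents G) (h0 : ∀ C, 0 ≤ A.delta C) {D : Finset α}
    (hD : A.IsStrong D) {Y F : Set α} (hF : G.IsClosed F) (hY : Y = F ∩ P) :
    A.delta (D.filter (· ∈ Y)) = G.dim (D.filter (· ∈ Y)) := by
  have : D.filter (· ∈ Y) = (D.filter (· ∈ P)).filter (· ∈ F) := by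
    ext; simp only [hY, mem_filter, Set.mem_inter_iff]; tauto
  rw [this]
  exact (hD.filter hP).delta_filter_eq_dim hG h0 hF

theorem flatSum_eq_deltaCover {G : Pregeometry α} {D : Finset α} {Sig : Finset (Set α)}
    (h : ∀ S ∈ Sig.powerset.filter (· ≠ ∅),
      (G.sdim (⋂₀ ↑S) : ℤ) = A.delta (D.filter (· ∈ ⋂₀ (S : Set (Set α))))) :
    G.flatSum Sig = A.deltaCover D Sig := by
  rw [← sum_delta_filter_sInter]
  exact sum_congr rfl fun S hS => by rw [h S hS]

end

end HGraph

/-- if `B ≤ A` (the induced subhypergraph on `P` is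
self-sufficient in `A`), then `G_B ⊑ G_A`: for every finite collection `Σ` of
finite-dimensional closed sets of `G_A`, `Δ_{G_B}(Σ_P) ≤ Δ_{G_A}(Σ)`. -/
theorem strong_embedding_of_selfSuff {α : Type*} [DecidableEq α]
    (A : HGraph α) (hA : A.SelfSuff ∅) (P : Set α) (hP : A.SelfSuff P)
    (Ga Gb : Pregeometry α) (hga : A.Represents Ga)
    (hgb : (A.restrict P).Represents Gb) :
    ∀ Sig : Finset (Set α), (∀ E ∈ Sig, Ga.IsClosed E) →
      (∀ E ∈ Sig, Ga.edim E ≠ ⊤) →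
      Gb.flatSum (Sig.image (· ∩ P)) ≤ Ga.flatSum Sig := by
  intro Sig hcl hfin
  have h0 := HGraph.delta_nonneg hA
  have hfin' : ∀ E ∈ Sig ∪ Sig.image (· ∩ P), Ga.edim E ≠ ⊤ := by
    simp only [Finset.mem_union, Finset.mem_image]
    rintro _ (hE | ⟨E, hE, rfl⟩)
    exacts [hfin _ hE, ne_top_of_le_ne_top (hfin E hE) (Ga.edim_mono Set.inter_subset_left)]
  obtain ⟨X, hX⟩ := Ga.exists_dim_filter_sInter_eq_sdim hfin'
  obtain ⟨D, hXD, hD⟩ := HGraph.exists_isStrong_superset h0 X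
  have hR : Ga.flatSum Sig = A.deltaCover D Sig := HGraph.flatSum_eq_deltaCover fun S hS => by
    simp only [Finset.mem_filter, Finset.mem_powerset, ← Finset.nonempty_iff_ne_empty] at hS
    rw [hD.delta_filter_eq_dim hga h0 (Pregeometry.IsClosed.sInter fun E hE => hcl E (hS.1 hE)),
      hX S (hS.1.trans Finset.subset_union_left) hS.2 D hXD]
  have hL : Gb.flatSum (Sig.image (· ∩ P)) = A.deltaCover D (Sig.image (· ∩ P)) :=
    HGraph.flatSum_eq_deltaCover fun S hS => by
      simp only [Finset.mem_filter, Finset.mem_powerset, ← Finset.nonempty_iff_ne_empty] at hS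
      obtain ⟨F, hF, hSF⟩ := Pregeometry.exists_isClosed_sInter_eq_inter hcl P hS.1 hS.2
      rw [hga.sdim_eq_of_restrict hA hP hgb (hSF ▸ Set.inter_subset_right),
        ← hX S (hS.1.trans Finset.subset_union_right) hS.2 D hXD,
        hD.delta_filter_eq_dim_of_eq_inter hP hga h0 hF hSF]
  rw [hL, hR]
  exact HGraph.deltaCover_image_inter_le hP D Sig
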